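/- arXiv:1706.06444 — 8 statements merged into one kernel-verified Lean document; each statement's English description precedes it below -/
import Mathlib

section
/- Let T and U be closed subspaces of a separable Hilbert space H with cos(φ_{T,U}) > 0, where cos(φ_{T,U}) = inf_{g ∈ T, ‖g‖=1} ‖P_U g‖. Then for every frame (u_j) for U with frame bounds A and B, the projected sequence (P_T u_j) is a frame for T with frame bounds A·cos²(φ_{T,U}) and B. -/
noncomputable section
open scoped InnerProductSpace ENNReal

/-- The sequence space ℓ²(ℕ). -/
abbrev Lp2 : Type := lp (fun _ : ℕ => ℂ) 2

/-- `u` is a frame for the subspace `U` with frame bounds `A` and `B`: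
`A‖f‖² ≤ Σ_j |⟨f,u_j⟩|² ≤ B‖f‖²` for all `f ∈ U`, and all `u_j ∈ U`. -/
def IsFrameFor {H : Type} [NormedAddCommGroup H] [InnerProductSpace ℂ H]
    (u : ℕ → H) (U : Submodule ℂ H) (A B : ℝ) : Prop :=
  (∀ j, u j ∈ U) ∧
    ∀ f ∈ U, A * ‖f‖ ^ 2 ≤ ∑' j, ‖⟪u j, f⟫_ℂ‖ ^ 2 ∧
      ∑' j, ‖⟪u j, f⟫_ℂ‖ ^ 2 ≤ B * ‖f‖ ^ 2

/-- `cos(φ_{T,U}) = inf_{g ∈ T, ‖g‖=1} ‖P_U g‖` (orthogonal-projection form). -/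
def cosAngleP {H : Type} [NormedAddCommGroup H] [InnerProductSpace ℂ H]
    [CompleteSpace H] (T U : Submodule ℂ H) [CompleteSpace U] : ℝ :=
  sInf {r : ℝ | ∃ g ∈ T, ‖g‖ = 1 ∧ r = ‖(U.orthogonalProjectionOnto g : H)‖}

/-- `cos(φ_{T,Y}) = inf_{g ∈ T, ‖g‖=1} sup_{v ∈ Y, ‖v‖=1} |⟨g,v⟩|` (inner-product form,
for a general subset `Y`). -/
def cosAngleS {H : Type} [NormedAddCommGroup H] [InnerProductSpace ℂ H]
    (T : Submodule ℂ H) (Y : Set H) : ℝ :=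
  sInf {r : ℝ | ∃ g ∈ T, ‖g‖ = 1 ∧
    r = sSup {s : ℝ | ∃ v ∈ Y, ‖v‖ = 1 ∧ s = ‖⟪g, v⟫_ℂ‖}}

/-!
For `f ∈ T` and `u_j ∈ U` we have `⟪P_T u_j, f⟫ = ⟪u_j, f⟫ = ⟪u_j, P_U f⟫`, so the frame sums of
`(P_T u_j)` at `f` are the frame sums of `(u_j)` at `P_U f ∈ U`. These lie between `A‖P_U f‖²` and
`B‖P_U f‖²`, and `cos(φ_{T,U}) ‖f‖ ≤ ‖P_U f‖ ≤ ‖f‖`.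
-/

section

variable {H : Type} [NormedAddCommGroup H] [InnerProductSpace ℂ H]

theorem inner_orthogonalProjectionOnto_eq_inner_orthogonalProjectionOnto
    {T U : Submodule ℂ H} [T.HasOrthogonalProjection] [U.HasOrthogonalProjection]
    {x f : H} (hx : x ∈ U) (hf : f ∈ T) :
    ⟪(T.orthogonalProjectionOnto x : H), f⟫_ℂ = ⟪x, (U.orthogonalProjectionOnto f : H)⟫_ℂ := by
  change ⟪T.starProjection x, f⟫_ℂ = ⟪x, U.starProjection f⟫_ℂ
  rw [Submodule.inner_starProjection_left_eq_right, Submodule.starProjection_eq_self_iff.mpr hf,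
    ← Submodule.inner_starProjection_left_eq_right, Submodule.starProjection_eq_self_iff.mpr hx]

variable [CompleteSpace H] (T U : Submodule ℂ H) [CompleteSpace U]

theorem cosAngleP_nonneg : 0 ≤ cosAngleP T U :=
  Real.sInf_nonneg fun _ ⟨_, _, _, hr⟩ => hr ▸ norm_nonneg _

theorem cosAngleP_mul_norm_le {g : H} (hg : g ∈ T) :
    cosAngleP T U * ‖g‖ ≤ ‖(U.orthogonalProjectionOnto g : H)‖ := by
  rcases eq_or_ne g 0 with rfl | hne
  · simp
  have hg0 : 0 < ‖g‖ := norm_pos_iff.mpr hne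
  have hbdd : BddBelow {r : ℝ | ∃ g ∈ T, ‖g‖ = 1 ∧ r = ‖(U.orthogonalProjectionOnto g : H)‖} :=
    ⟨0, fun _ ⟨_, _, _, hr⟩ => hr ▸ norm_nonneg _⟩
  have hunit : cosAngleP T U ≤ ‖(U.orthogonalProjectionOnto ((‖g‖ : ℂ)⁻¹ • g) : H)‖ :=
    csInf_le hbdd ⟨(‖g‖ : ℂ)⁻¹ • g, T.smul_mem _ hg, by simp [norm_smul, hg0.ne'], rfl⟩
  rw [map_smul, Submodule.coe_smul, norm_smul, norm_inv, Complex.norm_real, norm_norm] at hunit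
  rwa [← le_inv_mul_iff₀' hg0]

end

theorem projected_frame_general
    {H : Type} [NormedAddCommGroup H] [InnerProductSpace ℂ H] [CompleteSpace H]
    (T U : Submodule ℂ H) [CompleteSpace T] [CompleteSpace U]
    (u : ℕ → H) (A B : ℝ) (hA : 0 < A) (hAB : A ≤ B)
    (hframe : IsFrameFor u U A B) :
    IsFrameFor (fun j => (T.orthogonalProjectionOnto (u j) : H)) T
      (A * cosAngleP T U ^ 2) B := by
  obtain ⟨huU, hbounds⟩ := hframe
  refine ⟨fun j => (T.orthogonalProjectionOnto (u j)).2, fun f hf => ?_⟩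
  set g : H := (U.orthogonalProjectionOnto f : H)
  simp only [inner_orthogonalProjectionOnto_eq_inner_orthogonalProjectionOnto (huU _) hf]
  obtain ⟨hlower, hupper⟩ := hbounds g (U.orthogonalProjectionOnto f).2
  constructor
  · calc A * cosAngleP T U ^ 2 * ‖f‖ ^ 2 = A * (cosAngleP T U * ‖f‖) ^ 2 := by ring
      _ ≤ A * ‖g‖ ^ 2 := by
        gcongr
        · exact mul_nonneg (cosAngleP_nonneg T U) (norm_nonneg f)
        · exact cosAngleP_mul_norm_le T U hf
      _ ≤ _ := hlower
  · calc _ ≤ B * ‖g‖ ^ 2 := hupper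
      _ ≤ B * ‖f‖ ^ 2 := by
        gcongr
        · exact hA.le.trans hAB
        · exact U.norm_orthogonalProjectionOnto_apply_le f

/-- If `cos(φ_{T,U}) > 0`, then for every frame `(u_j)` for `U` with bounds
`A, B`, the projected sequence `(P_T u_j)` is a frame for `T` with bounds
`A·cos²(φ_{T,U})` and `B`. -/
theorem projected_frame
    {H : Type} [NormedAddCommGroup H] [InnerProductSpace ℂ H] [CompleteSpace H]
    (T U : Submodule ℂ H) [CompleteSpace T] [CompleteSpace U]
    (hangle : 0 < cosAngleP T U)
    (u : ℕ → H) (A B : ℝ) (hA : 0 < A) (hAB : A ≤ B)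
    (hframe : IsFrameFor u U A B) :
    IsFrameFor (fun j => (T.orthogonalProjectionOnto (u j) : H)) T
      (A * cosAngleP T U ^ 2) B :=
  projected_frame_general T U u A B hA hAB hframe
end
end

section
/- Let (u_j) be a Bessel sequence spanning a closed subspace U of H with analysis operator U*, and T a closed subspace. If Q: ℓ² → T is a bounded operator with QU*g = g for all g ∈ T, then (P_T u_j) is a frame for T and the sequence (h_j) defined by h_j = Q e_j (e_j the standard basis of ℓ²) is a dual frame of (P_T u_j) in T. -/
noncomputable section
open scoped InnerProductSpace ENNReal

/-!
The analysis operator `U*` restricted to `T` has the bounded left inverse `Q`, so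
`‖g‖ ≤ ‖Q‖ ‖U* g‖` gives the lower frame bound and `‖U* g‖ ≤ ‖U*‖ ‖g‖` the upper one; on `T`
the coefficients `⟨u_j, g⟩` and `⟨P_T u_j, g⟩` agree. Expanding `U* g = Σ_j (U* g)_j e_j` in `ℓ²`
and applying `Q` gives the dual frame expansion `g = Q U* g = Σ_j ⟨P_T u_j, g⟩ Q e_j`.
-/

theorem lp.norm_sq_eq_tsum {ι : Type*} {E : ι → Type*} [∀ i, NormedAddCommGroup (E i)]
    (f : lp E 2) : ‖f‖ ^ 2 = ∑' i, ‖f i‖ ^ 2 := by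
  exact_mod_cast lp.norm_rpow_eq_tsum (p := 2) (by norm_num) f

theorem ContinuousLinearMap.hasSum_smul_apply_lp_single {𝕜 ι E : Type*} [NormedField 𝕜]
    [DecidableEq ι] [NormedAddCommGroup E] [NormedSpace 𝕜 E]
    (Q : lp (fun _ : ι => 𝕜) 2 →L[𝕜] E) (c : lp (fun _ : ι => 𝕜) 2) :
    HasSum (fun i => c i • Q (lp.single 2 i 1)) (Q c) := by
  have hc : HasSum (fun i => lp.single 2 i (c i)) c := lp.hasSum_single (by norm_num) c
  convert hc.mapL Q using 2 with i
  rw [← map_smul, ← lp.single_smul, smul_eq_mul, mul_one]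

theorem Submodule.inner_coe_orthogonalProjectionOnto_of_mem {𝕜 E : Type*} [RCLike 𝕜]
    [NormedAddCommGroup E] [InnerProductSpace 𝕜 E] (K : Submodule 𝕜 E)
    [K.HasOrthogonalProjection] (v : E) {g : E} (hg : g ∈ K) :
    ⟪(K.orthogonalProjectionOnto v : E), g⟫_𝕜 = ⟪v, g⟫_𝕜 := by
  simpa only [K.coe_inner] using K.inner_orthogonalProjectionOnto_eq_of_mem_right ⟨g, hg⟩ v

-- The `+ 1` keeps the bounds positive and ordered also when `Q = 0` (i.e. `T = ⊥`).
theorem isFrameFor_of_leftInverse_analysis {H : Type} [NormedAddCommGroup H]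
    [InnerProductSpace ℂ H] {T : Submodule ℂ H} {v : ℕ → H} (hv : ∀ j, v j ∈ T)
    {Ustar : H →L[ℂ] Lp2} (hUstar : ∀ g ∈ T, ∀ j, Ustar g j = ⟪v j, g⟫_ℂ)
    {Q : Lp2 →L[ℂ] H} (hQ : ∀ g ∈ T, Q (Ustar g) = g) :
    IsFrameFor v T (‖Q‖ ^ 2 + 1)⁻¹ (‖Ustar‖ ^ 2 + 1) := by
  refine ⟨hv, fun g hg => ?_⟩
  have hsum : ∑' j, ‖⟪v j, g⟫_ℂ‖ ^ 2 = ‖Ustar g‖ ^ 2 := by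
    simp only [lp.norm_sq_eq_tsum, hUstar g hg]
  rw [hsum]
  constructor
  · rw [inv_mul_le_iff₀ (by positivity)]
    calc ‖g‖ ^ 2 = ‖Q (Ustar g)‖ ^ 2 := by rw [hQ g hg]
      _ ≤ (‖Q‖ * ‖Ustar g‖) ^ 2 := by gcongr; exact Q.le_opNorm _
      _ ≤ (‖Q‖ ^ 2 + 1) * ‖Ustar g‖ ^ 2 := by rw [mul_pow]; gcongr; linarith
  · calc ‖Ustar g‖ ^ 2 ≤ (‖Ustar‖ * ‖g‖) ^ 2 := by gcongr; exact Ustar.le_opNorm g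
      _ ≤ (‖Ustar‖ ^ 2 + 1) * ‖g‖ ^ 2 := by rw [mul_pow]; gcongr; linarith

theorem dual_frame_of_perfect_operator_general
    {H : Type} [NormedAddCommGroup H] [InnerProductSpace ℂ H]
    (T : Submodule ℂ H) [CompleteSpace T]
    (u : ℕ → H)
    (Ustar : H →L[ℂ] Lp2) (hUstar : ∀ f j, Ustar f j = ⟪u j, f⟫_ℂ)
    (Q : Lp2 →L[ℂ] H) (hQT : ∀ c, Q c ∈ T)
    (hperfect : ∀ g ∈ T, Q (Ustar g) = g) :
    (∃ A' B' : ℝ, 0 < A' ∧ A' ≤ B' ∧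
      IsFrameFor (fun j => (T.orthogonalProjectionOnto (u j) : H)) T A' B') ∧
    (∀ j, Q (lp.single 2 j 1) ∈ T) ∧
    (∀ g ∈ T, HasSum
      (fun j => ⟪(T.orthogonalProjectionOnto (u j) : H), g⟫_ℂ • Q (lp.single 2 j 1)) g) := by
  have hanalysis : ∀ g ∈ T, ∀ j, Ustar g j = ⟪(T.orthogonalProjectionOnto (u j) : H), g⟫_ℂ :=
    fun g hg j => by rw [hUstar, T.inner_coe_orthogonalProjectionOnto_of_mem _ hg]
  have hbounds : (‖Q‖ ^ 2 + 1)⁻¹ ≤ ‖Ustar‖ ^ 2 + 1 :=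
    (inv_le_one_of_one_le₀ (le_add_of_nonneg_left (by positivity))).trans
      (le_add_of_nonneg_left (by positivity))
  refine ⟨⟨_, _, by positivity, hbounds,
    isFrameFor_of_leftInverse_analysis (fun j => Submodule.coe_mem _) hanalysis hperfect⟩,
    fun j => hQT _, fun g hg => ?_⟩
  simpa only [hanalysis g hg, hperfect g hg] using Q.hasSum_smul_apply_lp_single (Ustar g)

/-- If `Q : ℓ² → T` is bounded with `QU*g = g` for `g ∈ T`, then
`(P_T u_j)` is a frame for `T` and `(h_j) = (Q e_j)` is a dual frame of `(P_T u_j)`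
in `T`, i.e. `g = Σ_j ⟨g, P_T u_j⟩ h_j` for all `g ∈ T`. -/
theorem dual_frame_of_perfect_operator
    {H : Type} [NormedAddCommGroup H] [InnerProductSpace ℂ H] [CompleteSpace H]
    (T U : Submodule ℂ H) [CompleteSpace T]
    (u : ℕ → H) (hspan : U = (Submodule.span ℂ (Set.range u)).topologicalClosure)
    (B : ℝ) (hBessel : ∀ f : H, ∑' j, ‖⟪u j, f⟫_ℂ‖ ^ 2 ≤ B * ‖f‖ ^ 2)
    (Ustar : H →L[ℂ] Lp2) (hUstar : ∀ f j, Ustar f j = ⟪u j, f⟫_ℂ)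
    (Q : Lp2 →L[ℂ] H) (hQT : ∀ c, Q c ∈ T)
    (hperfect : ∀ g ∈ T, Q (Ustar g) = g) :
    (∃ A' B' : ℝ, 0 < A' ∧ A' ≤ B' ∧
      IsFrameFor (fun j => (T.orthogonalProjectionOnto (u j) : H)) T A' B') ∧
    (∀ j, Q (lp.single 2 j 1) ∈ T) ∧
    (∀ g ∈ T, HasSum
      (fun j => ⟪(T.orthogonalProjectionOnto (u j) : H), g⟫_ℂ • Q (lp.single 2 j 1)) g) :=
  dual_frame_of_perfect_operator_general T u Ustar hUstar Q hQT hperfect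
end
end

section
/- Let T and W be closed subspaces of a Hilbert space H with cos(φ_{T,W^⊥}) > 0, let H₁ = T ⊕ W and P_{T,W}: H₁ → T the oblique projection with range T and kernel W. Then for every f ∈ H₁, ‖f − P_T f‖ ≤ ‖f − P_{T,W} f‖ ≤ (1/cos(φ_{T,W^⊥})) ‖f − P_T f‖. -/
/-!
Write `f = t + w` with `t ∈ T`, `w ∈ W`. Then `f - P_{T,W} f = w` and `f - P_T f = P_{T^⊥} w`,
so both bounds concern a single `w ∈ W`: the first is `‖P_{T^⊥} w‖ ≤ ‖w‖`, and the second follows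
from `‖P_T w‖² ≤ (1 - c²) ‖w‖²` with `c = cos(φ_{T,W^⊥})` and Pythagoras.
-/

noncomputable section
open scoped InnerProductSpace ENNReal

section CosAngle

variable {H : Type} [NormedAddCommGroup H] [InnerProductSpace ℂ H]

def cosAngleVec (g : H) (Y : Set H) : ℝ :=
  sSup {s : ℝ | ∃ v ∈ Y, ‖v‖ = 1 ∧ s = ‖⟪g, v⟫_ℂ‖}

theorem cosAngleS_eq_sInf_cosAngleVec (T : Submodule ℂ H) (Y : Set H) :
    cosAngleS T Y = sInf {r : ℝ | ∃ g ∈ T, ‖g‖ = 1 ∧ r = cosAngleVec g Y} :=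
  rfl

theorem cosAngleVec_nonneg (g : H) (Y : Set H) : 0 ≤ cosAngleVec g Y :=
  Real.sSup_nonneg <| by
    rintro s ⟨v, -, -, rfl⟩
    exact norm_nonneg _

theorem cosAngleVec_le_norm (g : H) (Y : Set H) : cosAngleVec g Y ≤ ‖g‖ :=
  Real.sSup_le (by
    rintro s ⟨v, -, hv, rfl⟩
    simpa [hv] using norm_inner_le_norm (𝕜 := ℂ) g v) (norm_nonneg g)

theorem cosAngleS_nonneg (T : Submodule ℂ H) (Y : Set H) : 0 ≤ cosAngleS T Y :=
  Real.sInf_nonneg <| by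
    rintro r ⟨g, -, -, rfl⟩
    exact cosAngleVec_nonneg g Y

theorem cosAngleS_le_cosAngleVec {T : Submodule ℂ H} (Y : Set H) {g : H} (hg : g ∈ T)
    (hg1 : ‖g‖ = 1) : cosAngleS T Y ≤ cosAngleVec g Y :=
  csInf_le ⟨0, by rintro r ⟨g, -, -, rfl⟩; exact cosAngleVec_nonneg g Y⟩ ⟨g, hg, hg1, rfl⟩

-- `sInf ∅ = 0` covers the case `T = ⊥`.
theorem cosAngleS_le_one (T : Submodule ℂ H) (Y : Set H) : cosAngleS T Y ≤ 1 := by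
  rw [cosAngleS_eq_sInf_cosAngleVec]
  rcases Set.eq_empty_or_nonempty {r : ℝ | ∃ g ∈ T, ‖g‖ = 1 ∧ r = cosAngleVec g Y}
    with hempty | ⟨r, g, hg, hg1, rfl⟩
  · rw [hempty, Real.sInf_empty]
    exact zero_le_one
  · exact (cosAngleS_le_cosAngleVec Y hg hg1).trans (hg1 ▸ cosAngleVec_le_norm g Y)

theorem norm_inner_le_norm_starProjection_mul_norm (K : Submodule ℂ H)
    [K.HasOrthogonalProjection] (g : H) {v : H} (hv : v ∈ K) :
    ‖⟪g, v⟫_ℂ‖ ≤ ‖K.starProjection g‖ * ‖v‖ := by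
  rw [← K.starProjection_eq_self_iff.2 hv, ← K.inner_starProjection_left_eq_right,
    K.starProjection_eq_self_iff.2 hv]
  exact norm_inner_le_norm _ _

theorem cosAngleVec_le_norm_starProjection (K : Submodule ℂ H) [K.HasOrthogonalProjection]
    (g : H) : cosAngleVec g K ≤ ‖K.starProjection g‖ :=
  Real.sSup_le (by
    rintro s ⟨v, hv, hv1, rfl⟩
    simpa [hv1] using norm_inner_le_norm_starProjection_mul_norm K g hv) (norm_nonneg _)

theorem cosAngleS_mul_norm_le_norm_starProjection {T : Submodule ℂ H} (K : Submodule ℂ H)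
    [K.HasOrthogonalProjection] {g : H} (hg : g ∈ T) :
    cosAngleS T K * ‖g‖ ≤ ‖K.starProjection g‖ := by
  rcases eq_or_ne g 0 with rfl | hg0
  · simp
  have hpos : 0 < ‖g‖ := norm_pos_iff.2 hg0
  have hunit : cosAngleS T K ≤ ‖K.starProjection ((‖g‖⁻¹ : ℂ) • g)‖ :=
    (cosAngleS_le_cosAngleVec _ (T.smul_mem _ hg) (norm_smul_inv_norm hg0)).trans
      (cosAngleVec_le_norm_starProjection K _)
  rw [map_smul, norm_smul, norm_inv, Complex.norm_real, Real.norm_eq_abs, abs_of_pos hpos,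
    le_inv_mul_iff₀ hpos] at hunit
  rwa [mul_comm]

/-- With `g = P_T w` and `c = cos(φ_{T,W^⊥})`: `‖g‖² = ⟨g, w⟩ = ⟨P_{W^⊥⊥} g, w⟩ ≤ ‖P_{W^⊥⊥} g‖ ‖w‖`,
while `‖P_{W^⊥⊥} g‖² = ‖g‖² - ‖P_{W^⊥} g‖² ≤ (1 - c²) ‖g‖²`. -/
theorem norm_starProjection_sq_le_of_mem {T W : Submodule ℂ H} [T.HasOrthogonalProjection]
    [Wᗮ.HasOrthogonalProjection] {w : H} (hw : w ∈ W) :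
    ‖T.starProjection w‖ ^ 2 ≤ (1 - cosAngleS T Wᗮ ^ 2) * ‖w‖ ^ 2 := by
  set c := cosAngleS T Wᗮ
  set g := T.starProjection w
  have hc0 : 0 ≤ c := cosAngleS_nonneg T _
  have hc1 : c ≤ 1 := cosAngleS_le_one T _
  have hg_inner : ‖g‖ ^ 2 ≤ ‖Wᗮᗮ.starProjection g‖ * ‖w‖ := by
    have hre : ‖g‖ ^ 2 = RCLike.re ⟪g, w⟫_ℂ := by
      rw [T.re_inner_starProjection_eq_normSq]
      rfl
    rw [hre]
    exact (RCLike.re_le_norm _).trans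
      (norm_inner_le_norm_starProjection_mul_norm _ g (W.le_orthogonal_orthogonal hw))
  have hg_perp : ‖Wᗮᗮ.starProjection g‖ ^ 2 ≤ (1 - c ^ 2) * ‖g‖ ^ 2 := by
    have hpyth := Wᗮ.norm_sq_eq_add_norm_sq_starProjection g
    have hangle : c * ‖g‖ ≤ ‖Wᗮ.starProjection g‖ :=
      cosAngleS_mul_norm_le_norm_starProjection _ (T.starProjection_apply_mem w)
    nlinarith [mul_nonneg hc0 (norm_nonneg g)]
  rcases eq_or_ne ‖g‖ 0 with hg0 | hg0
  · rw [hg0, zero_pow two_ne_zero]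
    exact mul_nonneg (by nlinarith) (sq_nonneg _)
  · have hgpos : 0 < ‖g‖ ^ 2 := by positivity
    have h4 : ‖g‖ ^ 2 * ‖g‖ ^ 2 ≤ (1 - c ^ 2) * ‖w‖ ^ 2 * ‖g‖ ^ 2 := by
      nlinarith [norm_nonneg (Wᗮᗮ.starProjection g), norm_nonneg w]
    exact le_of_mul_le_mul_right h4 hgpos

theorem cosAngleS_mul_norm_le_norm_starProjection_orthogonal {T W : Submodule ℂ H}
    [T.HasOrthogonalProjection] [Wᗮ.HasOrthogonalProjection] {w : H} (hw : w ∈ W) :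
    cosAngleS T Wᗮ * ‖w‖ ≤ ‖Tᗮ.starProjection w‖ := by
  have hpyth := T.norm_sq_eq_add_norm_sq_starProjection w
  have hsq := norm_starProjection_sq_le_of_mem (T := T) hw
  refine (pow_le_pow_iff_left₀ (mul_nonneg (cosAngleS_nonneg T _) (norm_nonneg w))
    (norm_nonneg _) two_ne_zero).1 ?_
  nlinarith

end CosAngle

/-- If `cos(φ_{T,W^⊥}) > 0` and `P_{T,W}` is the oblique projection of
`H₁ = T ⊕ W` onto `T` with kernel `W`, then for `f ∈ H₁`:
`‖f − P_T f‖ ≤ ‖f − P_{T,W} f‖ ≤ (1/cos(φ_{T,W^⊥})) ‖f − P_T f‖`. -/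
theorem oblique_projection_error_bounds
    {H : Type} [NormedAddCommGroup H] [InnerProductSpace ℂ H] [CompleteSpace H]
    (T W : Submodule ℂ H) [CompleteSpace T]
    (hangle : 0 < cosAngleS T ((Wᗮ : Submodule ℂ H) : Set H))
    (P : H →L[ℂ] H) (hP : ∀ t ∈ T, ∀ w ∈ W, P (t + w) = t) :
    ∀ f ∈ T ⊔ W,
      ‖f - (T.orthogonalProjectionOnto f : H)‖ ≤ ‖f - P f‖ ∧
      ‖f - P f‖ ≤ (1 / cosAngleS T ((Wᗮ : Submodule ℂ H) : Set H)) *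
        ‖f - (T.orthogonalProjectionOnto f : H)‖ := by
  intro f hf
  obtain ⟨t, ht, w, hw, rfl⟩ := Submodule.mem_sup.1 hf
  have hoblique : t + w - P (t + w) = w := by rw [hP t ht w hw, add_sub_cancel_left]
  have hortho : t + w - (T.orthogonalProjectionOnto (t + w) : H) = Tᗮ.starProjection w := by
    rw [← T.starProjection_apply, ← T.starProjection_orthogonal_val, map_add,
      T.starProjection_orthogonal_apply_eq_zero ht, zero_add]
  rw [hoblique, hortho, one_div, le_inv_mul_iff₀ hangle]
  exact ⟨Tᗮ.norm_starProjection_apply_le w,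
    cosAngleS_mul_norm_le_norm_starProjection_orthogonal hw⟩
end
end

section
/- Let T and W be closed subspaces of a Hilbert space H such that T ∩ W = {0} and T ⊕ W is closed, and let P_{T,W} be the oblique projection with range T and kernel W. Then the operator norm of P_{T,W} (on H₁ = T ⊕ W) equals 1/cos(φ_{T,W^⊥}). -/
noncomputable section
open scoped InnerProductSpace ENNReal

/-! For `x = t + w` with `t ∈ T`, `w ∈ W` we have `P x = t`, so `‖P‖⁻¹` is the infimum of
`dist(g, W)` over unit vectors `g ∈ T` (Kato's minimal gap). In a Hilbert space `dist(g, W)` is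
the norm of the orthogonal projection of `g` onto `Wᗮ`, which is `sup |⟪g, v⟫|` over unit
`v ∈ Wᗮ`, the supremum being attained at the normalized projection. -/

open Metric

namespace Submodule

section Normed

variable {𝕜 E : Type*} [RCLike 𝕜] [NormedAddCommGroup E] [NormedSpace 𝕜 E]

/-- Kato's minimal gap between `T` and `W` (for `T ⊓ W = ⊥`). -/
def minimalGap (T W : Submodule 𝕜 E) : ℝ :=
  sInf {r : ℝ | ∃ g ∈ T, ‖g‖ = 1 ∧ r = infDist g W}

def IsObliqueProjection (T W : Submodule 𝕜 E) (P : ↥(T ⊔ W) →L[𝕜] E) : Prop :=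
  ∀ (x : ↥(T ⊔ W)) (t w : E), t ∈ T → w ∈ W → (x : E) = t + w → P x = t

variable {T W : Submodule 𝕜 E}

@[simp]
theorem minimalGap_bot : (⊥ : Submodule 𝕜 E).minimalGap W = 0 := by
  have hempty : {r : ℝ | ∃ g ∈ (⊥ : Submodule 𝕜 E), ‖g‖ = 1 ∧ r = infDist g W} = ∅ :=
    Set.eq_empty_of_forall_notMem fun _ ⟨g, hg, hg1, _⟩ => by
      simp [(mem_bot 𝕜).mp hg] at hg1
  rw [minimalGap, hempty, Real.sInf_empty]

theorem minimalGap_le_infDist {g : E} (hg : g ∈ T) (hg1 : ‖g‖ = 1) :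
    T.minimalGap W ≤ infDist g W :=
  csInf_le ⟨0, fun _ ⟨_, _, _, hr⟩ => hr ▸ infDist_nonneg⟩ ⟨g, hg, hg1, rfl⟩

theorem minimalGap_mul_norm_le {t w : E} (ht : t ∈ T) (hw : w ∈ W) :
    T.minimalGap W * ‖t‖ ≤ ‖t + w‖ := by
  rcases eq_or_ne t 0 with rfl | ht0
  · simp
  set c : 𝕜 := (‖t‖⁻¹ : 𝕜)
  have hgap : T.minimalGap W ≤ infDist (c • t) W :=
    minimalGap_le_infDist (T.smul_mem c ht) (norm_smul_inv_norm ht0)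
  have hdist : infDist (c • t) W ≤ ‖t‖⁻¹ * ‖t + w‖ :=
    calc infDist (c • t) W ≤ dist (c • t) (-(c • w)) :=
          infDist_le_dist_of_mem (W.neg_mem (W.smul_mem c hw))
      _ = ‖t‖⁻¹ * ‖t + w‖ := by
          rw [dist_eq_norm, sub_neg_eq_add, ← smul_add, norm_smul, norm_inv, RCLike.norm_ofReal,
            abs_norm]
  calc T.minimalGap W * ‖t‖ ≤ ‖t‖⁻¹ * ‖t + w‖ * ‖t‖ := by gcongr; exact hgap.trans hdist
    _ = ‖t + w‖ := by field_simp [norm_ne_zero_iff.mpr ht0]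

namespace IsObliqueProjection

variable {P : ↥(T ⊔ W) →L[𝕜] E}

theorem norm_le_norm_mul_norm_sub (hP : IsObliqueProjection T W P) {t w : E} (ht : t ∈ T)
    (hw : w ∈ W) : ‖t‖ ≤ ‖P‖ * ‖t - w‖ := by
  have hx : t - w ∈ T ⊔ W := sub_mem (mem_sup_left ht) (mem_sup_right hw)
  have hPx : P ⟨t - w, hx⟩ = t := hP _ t (-w) ht (W.neg_mem hw) (sub_eq_add_neg t w)
  simpa [hPx] using P.le_opNorm ⟨t - w, hx⟩

theorem minimalGap_mul_norm_apply_le (hP : IsObliqueProjection T W P) (x : ↥(T ⊔ W)) :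
    T.minimalGap W * ‖P x‖ ≤ ‖x‖ := by
  obtain ⟨t, ht, w, hw, hx⟩ := mem_sup.mp x.2
  rw [hP x t w ht hw hx.symm, ← norm_coe, ← hx]
  exact minimalGap_mul_norm_le ht hw

theorem one_le_norm (hP : IsObliqueProjection T W P) (hT : T ≠ ⊥) : 1 ≤ ‖P‖ := by
  obtain ⟨t, ht, ht0⟩ := exists_mem_ne_zero_of_ne_bot hT
  have := hP.norm_le_norm_mul_norm_sub ht W.zero_mem
  rw [sub_zero] at this
  exact le_of_mul_le_mul_right (by rwa [one_mul]) (norm_pos_iff.mpr ht0)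

theorem inv_norm_le_minimalGap (hP : IsObliqueProjection T W P) (hT : T ≠ ⊥) :
    ‖P‖⁻¹ ≤ T.minimalGap W := by
  obtain ⟨t, ht, ht0⟩ := exists_mem_ne_zero_of_ne_bot hT
  have hnormP : 0 < ‖P‖ := one_pos.trans_le (hP.one_le_norm hT)
  refine le_csInf ⟨_, _, T.smul_mem _ ht, norm_smul_inv_norm (𝕜 := 𝕜) ht0, rfl⟩ ?_
  rintro _ ⟨g, hg, hg1, rfl⟩
  refine (le_infDist ⟨0, W.zero_mem⟩).2 fun w hw => ?_
  rw [dist_eq_norm, inv_le_iff_one_le_mul₀' hnormP]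
  simpa [hg1] using hP.norm_le_norm_mul_norm_sub hg hw

theorem norm_eq_one_div_minimalGap (hP : IsObliqueProjection T W P) :
    ‖P‖ = 1 / T.minimalGap W := by
  rcases eq_or_ne T ⊥ with rfl | hT
  -- both sides vanish, the right one because `sInf ∅ = 0` and `1 / 0 = 0`
  · have hP0 : P = 0 := by
      ext x
      exact hP x 0 x (zero_mem _) (by simpa using x.2) (zero_add _).symm
    rw [hP0, minimalGap_bot, div_zero, norm_zero]
  have hnormP : 0 < ‖P‖ := one_pos.trans_le (hP.one_le_norm hT)
  have hgap := hP.inv_norm_le_minimalGap hT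
  have hgap_pos : 0 < T.minimalGap W := (inv_pos.2 hnormP).trans_le hgap
  refine le_antisymm (P.opNorm_le_bound (by positivity) fun x => ?_) ?_
  · rw [one_div_mul_eq_div, le_div_iff₀ hgap_pos, mul_comm]
    exact hP.minimalGap_mul_norm_apply_le x
  · rwa [one_div, inv_le_comm₀ hgap_pos hnormP]

end IsObliqueProjection

end Normed

section InnerProduct

variable {𝕜 H : Type*} [RCLike 𝕜] [NormedAddCommGroup H] [InnerProductSpace 𝕜 H]

theorem norm_inner_le_infDist_of_mem_orthogonal {W : Submodule 𝕜 H} (g : H) {v : H}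
    (hv : v ∈ Wᗮ) (hv1 : ‖v‖ = 1) : ‖⟪g, v⟫_𝕜‖ ≤ infDist g W := by
  refine (le_infDist ⟨0, W.zero_mem⟩).2 fun w hw => ?_
  calc ‖⟪g, v⟫_𝕜‖ = ‖⟪g - w, v⟫_𝕜‖ := by
        rw [inner_sub_left, inner_right_of_mem_orthogonal hw hv, sub_zero]
    _ ≤ ‖g - w‖ := by simpa [hv1] using norm_inner_le_norm (𝕜 := 𝕜) (g - w) v
    _ = dist g w := (dist_eq_norm g w).symm

theorem infDist_le_norm_starProjection_orthogonal [CompleteSpace H] (W : Submodule 𝕜 H) (g : H) :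
    infDist g W ≤ ‖Wᗮ.starProjection g‖ := by
  have hmem : g - Wᗮ.starProjection g ∈ closure (W : Set H) := by
    rw [← topologicalClosure_coe, ← orthogonal_orthogonal_eq_closure]
    exact sub_starProjection_mem_orthogonal g
  calc infDist g W = infDist g (closure W) := infDist_closure.symm
    _ ≤ dist g (g - Wᗮ.starProjection g) := infDist_le_dist_of_mem hmem
    _ = ‖Wᗮ.starProjection g‖ := by rw [dist_eq_norm, sub_sub_cancel]

theorem sSup_norm_inner_orthogonal_eq_infDist [CompleteSpace H] (W : Submodule 𝕜 H) (g : H) :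
    sSup {s : ℝ | ∃ v ∈ ((Wᗮ : Submodule 𝕜 H) : Set H), ‖v‖ = 1 ∧ s = ‖⟪g, v⟫_𝕜‖} =
      infDist g W := by
  refine le_antisymm (Real.sSup_le ?_ infDist_nonneg) ?_
  · rintro _ ⟨v, hv, hv1, rfl⟩
    exact norm_inner_le_infDist_of_mem_orthogonal g hv hv1
  refine (infDist_le_norm_starProjection_orthogonal W g).trans ?_
  set q := Wᗮ.starProjection g
  rcases eq_or_ne q 0 with hq | hq
  · rw [hq, norm_zero]
    exact Real.sSup_nonneg fun _ ⟨_, _, _, hs⟩ => hs ▸ norm_nonneg _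
  have hbdd : BddAbove {s : ℝ | ∃ v ∈ ((Wᗮ : Submodule 𝕜 H) : Set H), ‖v‖ = 1 ∧
      s = ‖⟪g, v⟫_𝕜‖} := by
    refine ⟨‖g‖, ?_⟩
    rintro _ ⟨v, _, hv1, rfl⟩
    simpa [hv1] using norm_inner_le_norm (𝕜 := 𝕜) g v
  have hgq : ⟪g, q⟫_𝕜 = ⟪q, q⟫_𝕜 := by
    rw [← sub_eq_zero, ← inner_sub_left]
    exact starProjection_inner_eq_zero g q (starProjection_apply_mem _ g)
  refine le_csSup hbdd ⟨(‖q‖⁻¹ : 𝕜) • q, Wᗮ.smul_mem _ (starProjection_apply_mem _ g),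
    norm_smul_inv_norm hq, ?_⟩
  rw [inner_smul_right, hgq, inner_self_eq_norm_sq_to_K, norm_mul, norm_inv, norm_pow,
    RCLike.norm_ofReal, abs_norm]
  field_simp [norm_ne_zero_iff.mpr hq]

end InnerProduct

end Submodule

theorem cosAngleS_orthogonal_eq_minimalGap {H : Type} [NormedAddCommGroup H]
    [InnerProductSpace ℂ H] [CompleteSpace H] (T W : Submodule ℂ H) :
    cosAngleS T ((Wᗮ : Submodule ℂ H) : Set H) = T.minimalGap W := by
  simp_rw [cosAngleS, Submodule.sSup_norm_inner_orthogonal_eq_infDist]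
  rfl

theorem oblique_projection_norm_general
    {H : Type} [NormedAddCommGroup H] [InnerProductSpace ℂ H] [CompleteSpace H]
    (T W : Submodule ℂ H)
    (P : ↥(T ⊔ W) →L[ℂ] H)
    (hP : ∀ (x : ↥(T ⊔ W)) (t w : H), t ∈ T → w ∈ W → (x : H) = t + w → P x = t) :
    ‖P‖ = 1 / cosAngleS T ((Wᗮ : Submodule ℂ H) : Set H) := by
  rw [cosAngleS_orthogonal_eq_minimalGap]
  exact Submodule.IsObliqueProjection.norm_eq_one_div_minimalGap hP

/-- If `T ∩ W = {0}` and `T ⊕ W` is closed, then the oblique projection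
`P_{T,W} : H₁ = T ⊕ W → T` with range `T` and kernel `W` has operator norm
`‖P_{T,W}‖ = 1/cos(φ_{T,W^⊥})`. -/
theorem oblique_projection_norm
    {H : Type} [NormedAddCommGroup H] [InnerProductSpace ℂ H] [CompleteSpace H]
    (T W : Submodule ℂ H)
    (hdisj : T ⊓ W = ⊥) (hclosed : IsClosed ((T ⊔ W : Submodule ℂ H) : Set H))
    (P : ↥(T ⊔ W) →L[ℂ] H)
    (hP : ∀ (x : ↥(T ⊔ W)) (t w : H), t ∈ T → w ∈ W → (x : H) = t + w → P x = t) :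
    ‖P‖ = 1 / cosAngleS T ((Wᗮ : Submodule ℂ H) : Set H) :=
  oblique_projection_norm_general T W P hP
end
end

section
/- Let T, U be closed subspaces of H with cos(φ_{T,U}) > 0 and (u_j) a frame for U with frame bounds A, B and frame operator S. Then the angle between T and S(T) satisfies cos(φ_{T,S(T)}) ≥ (A/B) cos(φ_{T,U}) > 0. -/
noncomputable section
open scoped InnerProductSpace ENNReal

/-! For a unit vector `g ∈ T` with `P = P_U`, the frame inequalities give
`⟪g, S g⟫ = Σ |⟪u_j, P g⟫|² ≥ A ‖P g‖²`. On the other hand `S` is self-adjoint with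
`0 ≤ S ≤ B`, so `‖S‖ ≤ B`, and `S = S P`, so `‖S g‖ ≤ B ‖P g‖`. Hence the unit vector
`S g / ‖S g‖ ∈ S(T)` satisfies `|⟪g, S g / ‖S g‖⟫| ≥ (A / B) ‖P g‖ ≥ (A / B) cos φ_{T,U}`. -/

open RCLike

def IsFrameOperator {H : Type} [NormedAddCommGroup H] [InnerProductSpace ℂ H]
    (u : ℕ → H) (S : H →L[ℂ] H) : Prop :=
  ∀ f, HasSum (fun j => ⟪u j, f⟫_ℂ • u j) (S f)

namespace IsFrameOperator

variable {H : Type} [NormedAddCommGroup H] [InnerProductSpace ℂ H] {u : ℕ → H}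
  {S : H →L[ℂ] H}

theorem hasSum_inner (hS : IsFrameOperator u S) (f h : H) :
    HasSum (fun j => ⟪h, u j⟫_ℂ * ⟪u j, f⟫_ℂ) ⟪h, S f⟫_ℂ := by
  simpa only [innerSL_apply_apply, inner_smul_right, mul_comm] using (innerSL ℂ h).hasSum (hS f)

theorem hasSum_norm_inner_sq (hS : IsFrameOperator u S) (f : H) :
    HasSum (fun j => ‖⟪u j, f⟫_ℂ‖ ^ 2) (re ⟪f, S f⟫_ℂ) := by
  have hterm (j : ℕ) : ⟪f, u j⟫_ℂ * ⟪u j, f⟫_ℂ = ((‖⟪u j, f⟫_ℂ‖ ^ 2 : ℝ) : ℂ) := by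
    rw [← inner_conj_symm, RCLike.conj_mul, Complex.ofReal_pow]; rfl
  have := Complex.reCLM.hasSum (hS.hasSum_inner f f)
  simp only [hterm, Complex.reCLM_apply, Complex.ofReal_re] at this
  exact this

theorem isSymmetric (hS : IsFrameOperator u S) : (S : H →ₗ[ℂ] H).IsSymmetric := by
  intro f h
  rw [ContinuousLinearMap.coe_coe, ← inner_conj_symm]
  refine (((hS.hasSum_inner f h).star).unique ?_)
  simpa only [← starRingEnd_apply, map_mul, inner_conj_symm, mul_comm] using hS.hasSum_inner h f

end IsFrameOperator

section Frame

variable {H : Type} [NormedAddCommGroup H] [InnerProductSpace ℂ H] {u : ℕ → H}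
  {U : Submodule ℂ H} [U.HasOrthogonalProjection] {A B : ℝ} {S : H →L[ℂ] H}

theorem inner_starProjection_of_forall_mem (hu : ∀ j, u j ∈ U) (j : ℕ) (f : H) :
    ⟪u j, U.starProjection f⟫_ℂ = ⟪u j, f⟫_ℂ := by
  rw [← Submodule.inner_starProjection_left_eq_right,
    Submodule.starProjection_eq_self_iff.mpr (hu j)]

theorem IsFrameOperator.apply_starProjection (hS : IsFrameOperator u S) (hu : ∀ j, u j ∈ U)
    (f : H) : S (U.starProjection f) = S f :=
  (hS _).unique (by simpa only [inner_starProjection_of_forall_mem hu] using hS f)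

namespace IsFrameFor

theorem tsum_eq_re_inner (hframe : IsFrameFor u U A B) (hS : IsFrameOperator u S) (f : H) :
    ∑' j, ‖⟪u j, U.starProjection f⟫_ℂ‖ ^ 2 = re ⟪f, S f⟫_ℂ := by
  simpa only [inner_starProjection_of_forall_mem hframe.1] using (hS.hasSum_norm_inner_sq f).tsum_eq

theorem mul_norm_sq_le_re_inner (hframe : IsFrameFor u U A B) (hS : IsFrameOperator u S)
    (f : H) : A * ‖U.starProjection f‖ ^ 2 ≤ re ⟪f, S f⟫_ℂ :=
  hframe.tsum_eq_re_inner hS f ▸ (hframe.2 _ (U.starProjection_apply_mem f)).1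

theorem re_inner_le_mul_norm_sq (hframe : IsFrameFor u U A B) (hS : IsFrameOperator u S)
    (f : H) : re ⟪f, S f⟫_ℂ ≤ B * ‖U.starProjection f‖ ^ 2 :=
  hframe.tsum_eq_re_inner hS f ▸ (hframe.2 _ (U.starProjection_apply_mem f)).2

theorem opNorm_le (hframe : IsFrameFor u U A B) (hS : IsFrameOperator u S) (hB : 0 ≤ B) :
    ‖S‖ ≤ B := by
  rw [ContinuousLinearMap.norm_eq_iSup_rayleighQuotient S hS.isSymmetric]
  refine ciSup_le fun f => ?_
  have hnonneg : 0 ≤ re ⟪f, S f⟫_ℂ := (hS.hasSum_norm_inner_sq f).nonneg fun _ => by positivity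
  have hle : re ⟪f, S f⟫_ℂ ≤ B * ‖f‖ ^ 2 :=
    (hframe.re_inner_le_mul_norm_sq hS f).trans
      (by gcongr; exact U.norm_starProjection_apply_le f)
  rw [ContinuousLinearMap.rayleighQuotient, ContinuousLinearMap.reApplyInnerSelf_apply,
    inner_re_symm, abs_of_nonneg (by positivity)]
  exact div_le_of_le_mul₀ (sq_nonneg _) hB hle

theorem norm_apply_le (hframe : IsFrameFor u U A B) (hS : IsFrameOperator u S) (hB : 0 ≤ B)
    (f : H) : ‖S f‖ ≤ B * ‖U.starProjection f‖ := by
  rw [← hS.apply_starProjection hframe.1]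
  exact S.le_of_opNorm_le (hframe.opNorm_le hS hB) _

theorem apply_ne_zero (hframe : IsFrameFor u U A B) (hS : IsFrameOperator u S) (hA : 0 < A)
    {g : H} (hPg : U.starProjection g ≠ 0) : S g ≠ 0 := by
  intro hSg
  have hle := hframe.mul_norm_sq_le_re_inner hS g
  rw [hSg, inner_zero_right, map_zero] at hle
  have hpos : 0 < A * ‖U.starProjection g‖ ^ 2 := by
    have := norm_pos_iff.mpr hPg
    positivity
  exact hle.not_gt hpos

theorem div_mul_norm_starProjection_le (hframe : IsFrameFor u U A B) (hS : IsFrameOperator u S)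
    (hA : 0 ≤ A) (hB : 0 < B) {g : H} (hSg : S g ≠ 0) :
    A / B * ‖U.starProjection g‖ ≤ ‖⟪g, S g⟫_ℂ‖ / ‖S g‖ := by
  rw [le_div_iff₀ (norm_pos_iff.mpr hSg)]
  calc A / B * ‖U.starProjection g‖ * ‖S g‖
      ≤ A / B * ‖U.starProjection g‖ * (B * ‖U.starProjection g‖) := by
        gcongr; exact hframe.norm_apply_le hS hB.le g
    _ = A * ‖U.starProjection g‖ ^ 2 := by field_simp
    _ ≤ re ⟪g, S g⟫_ℂ := hframe.mul_norm_sq_le_re_inner hS g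
    _ ≤ ‖⟪g, S g⟫_ℂ‖ := re_le_norm _

end IsFrameFor

end Frame

section Angle

variable {H : Type} [NormedAddCommGroup H] [InnerProductSpace ℂ H] {T : Submodule ℂ H}

theorem cosAngleP_le_norm_starProjection [CompleteSpace H] {U : Submodule ℂ H} [CompleteSpace U]
    {g : H} (hg : g ∈ T) (hg1 : ‖g‖ = 1) : cosAngleP T U ≤ ‖U.starProjection g‖ :=
  csInf_le ⟨0, by rintro r ⟨g, -, -, rfl⟩; exact norm_nonneg _⟩
    ⟨g, hg, hg1, by rw [Submodule.starProjection_apply]⟩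

theorem exists_mem_norm_eq_one_of_cosAngleP_pos [CompleteSpace H] {U : Submodule ℂ H}
    [CompleteSpace U] (h : 0 < cosAngleP T U) : ∃ g ∈ T, ‖g‖ = 1 := by
  by_contra! hT
  have hempty : {r : ℝ | ∃ g ∈ T, ‖g‖ = 1 ∧ r = ‖(U.orthogonalProjectionOnto g : H)‖} = ∅ :=
    Set.eq_empty_of_forall_notMem fun _ ⟨g, hg, hg1, _⟩ => hT g hg hg1
  rw [cosAngleP, hempty, Real.sInf_empty] at h
  exact h.false

theorem le_cosAngleS {Y : Set H} {c : ℝ} (hT : ∃ g ∈ T, ‖g‖ = 1)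
    (h : ∀ g ∈ T, ‖g‖ = 1 → ∃ v ∈ Y, ‖v‖ = 1 ∧ c ≤ ‖⟪g, v⟫_ℂ‖) : c ≤ cosAngleS T Y := by
  obtain ⟨g₀, hg₀, hg₀1⟩ := hT
  refine le_csInf ⟨_, g₀, hg₀, hg₀1, rfl⟩ ?_
  rintro r ⟨g, hg, hg1, rfl⟩
  obtain ⟨v, hv, hv1, hcv⟩ := h g hg hg1
  have hbdd : BddAbove {s : ℝ | ∃ v ∈ Y, ‖v‖ = 1 ∧ s = ‖⟪g, v⟫_ℂ‖} := by
    refine ⟨1, ?_⟩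
    rintro s ⟨w, -, hw1, rfl⟩
    simpa [hg1, hw1] using norm_inner_le_norm g w
  exact hcv.trans (le_csSup hbdd ⟨v, hv, hv1, rfl⟩)

theorem exists_mem_image_norm_inner_eq (S : H →L[ℂ] H) {g : H} (hg : g ∈ T) (hSg : S g ≠ 0) :
    ∃ v ∈ S '' (T : Set H), ‖v‖ = 1 ∧ ‖⟪g, v⟫_ℂ‖ = ‖⟪g, S g⟫_ℂ‖ / ‖S g‖ := by
  refine ⟨(‖S g‖⁻¹ : ℂ) • S g, ⟨(‖S g‖⁻¹ : ℂ) • g, T.smul_mem _ hg, map_smul S _ g⟩, ?_, ?_⟩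
  · simp [norm_smul, hSg]
  · rw [inner_smul_right, norm_mul, div_eq_inv_mul]
    simp

end Angle

theorem angle_T_ST_lower_bound_general
    {H : Type} [NormedAddCommGroup H] [InnerProductSpace ℂ H] [CompleteSpace H]
    (T U : Submodule ℂ H) [CompleteSpace U]
    (hangle : 0 < cosAngleP T U)
    (u : ℕ → H) (A B : ℝ) (hA : 0 < A) (hAB : A ≤ B) (hframe : IsFrameFor u U A B)
    (S : H →L[ℂ] H) (hS : ∀ f, HasSum (fun j => ⟪u j, f⟫_ℂ • u j) (S f)) :
    (A / B) * cosAngleP T U ≤ cosAngleS T (S '' (T : Set H)) ∧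
      0 < cosAngleS T (S '' (T : Set H)) := by
  have hB : 0 < B := hA.trans_le hAB
  have hmain : A / B * cosAngleP T U ≤ cosAngleS T (S '' (T : Set H)) := by
    refine le_cosAngleS (exists_mem_norm_eq_one_of_cosAngleP_pos hangle) fun g hg hg1 => ?_
    have hPg : cosAngleP T U ≤ ‖U.starProjection g‖ := cosAngleP_le_norm_starProjection hg hg1
    have hSg : S g ≠ 0 :=
      hframe.apply_ne_zero hS hA (norm_pos_iff.mp (hangle.trans_le hPg))
    obtain ⟨v, hv, hv1, hgv⟩ := exists_mem_image_norm_inner_eq S hg hSg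
    refine ⟨v, hv, hv1, hgv ▸ ?_⟩
    calc A / B * cosAngleP T U ≤ A / B * ‖U.starProjection g‖ := by gcongr
      _ ≤ _ := hframe.div_mul_norm_starProjection_le hS hA.le hB hSg
  exact ⟨hmain, (mul_pos (div_pos hA hB) hangle).trans_le hmain⟩

/-- If `cos(φ_{T,U}) > 0` and `S` is the frame operator of a frame for `U`
with bounds `A, B`, then `cos(φ_{T,S(T)}) ≥ (A/B) cos(φ_{T,U}) > 0`. -/
theorem angle_T_ST_lower_bound
    {H : Type} [NormedAddCommGroup H] [InnerProductSpace ℂ H] [CompleteSpace H]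
    (T U : Submodule ℂ H) [CompleteSpace T] [CompleteSpace U]
    (hangle : 0 < cosAngleP T U)
    (u : ℕ → H) (A B : ℝ) (hA : 0 < A) (hAB : A ≤ B) (hframe : IsFrameFor u U A B)
    (S : H →L[ℂ] H) (hS : ∀ f, HasSum (fun j => ⟪u j, f⟫_ℂ • u j) (S f)) :
    (A / B) * cosAngleP T U ≤ cosAngleS T (S '' (T : Set H)) ∧
      0 < cosAngleS T (S '' (T : Set H)) :=
  angle_T_ST_lower_bound_general T U hangle u A B hA hAB hframe S hS
end
end

section
/- Let T, U be closed subspaces of H with cos(φ_{T,U}) > 0, (u_j) a frame for U with analysis operator U*, and let Q₁: ℓ² → T be the least squares reconstruction operator given by Q₁ d = argmin_{g ∈ T} ‖U* g − d‖₂. If Q: ℓ² → T is any bounded operator with QU*g = g for all g ∈ T, then ‖Q‖_op ≥ ‖Q₁‖_op. -/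
noncomputable section
open scoped InnerProductSpace ENNReal

/-!
For every `d`, the vector `U* (Q₁ d)` is the best approximation of `d` from the subspace
`U*(T)`, hence orthogonal to `d - U* (Q₁ d)`; by Pythagoras `‖U* (Q₁ d)‖ ≤ ‖d‖`. Any
perfect reconstruction operator `Q` recovers `Q₁ d ∈ T` from `U* (Q₁ d)`, so
`‖Q₁ d‖ ≤ ‖Q‖ ‖U* (Q₁ d)‖ ≤ ‖Q‖ ‖d‖`.
-/

theorem Submodule.norm_le_of_forall_norm_sub_le {𝕜 E : Type*} [RCLike 𝕜]
    [NormedAddCommGroup E] [InnerProductSpace 𝕜 E] {K : Submodule 𝕜 E} {d v : E}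
    (hv : v ∈ K) (hmin : ∀ w ∈ K, ‖d - v‖ ≤ ‖d - w‖) : ‖v‖ ≤ ‖d‖ := by
  have : Nonempty K := ⟨⟨v, hv⟩⟩
  have hinf : ‖d - v‖ = ⨅ w : K, ‖d - w‖ :=
    le_antisymm (le_ciInf fun w => hmin w w.2)
      (ciInf_le (f := fun w : K => ‖d - w‖) ⟨0, Set.forall_mem_range.2 fun _ => norm_nonneg _⟩
        ⟨v, hv⟩)
  have horth : ⟪d - v, v⟫_𝕜 = 0 := (K.norm_eq_iInf_iff_inner_eq_zero hv).mp hinf v hv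
  have hpyth : ‖d‖ * ‖d‖ = ‖d - v‖ * ‖d - v‖ + ‖v‖ * ‖v‖ := by
    simpa only [sub_add_cancel] using norm_add_sq_eq_norm_sq_add_norm_sq_of_inner_eq_zero _ _ horth
  nlinarith [norm_nonneg v, norm_nonneg d, mul_self_nonneg ‖d - v‖]

theorem least_squares_minimal_norm_general
    {H : Type} [NormedAddCommGroup H] [InnerProductSpace ℂ H]
    (T : Submodule ℂ H)
    (Ustar : H →L[ℂ] Lp2)
    (Q₁ : Lp2 →L[ℂ] H) (hQ₁T : ∀ d, Q₁ d ∈ T)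
    (hQ₁min : ∀ d : Lp2, ∀ g ∈ T, ‖Ustar (Q₁ d) - d‖ ≤ ‖Ustar g - d‖)
    (Q : Lp2 →L[ℂ] H)
    (hperfect : ∀ g ∈ T, Q (Ustar g) = g) :
    ‖Q₁‖ ≤ ‖Q‖ := by
  refine Q₁.opNorm_le_bound (norm_nonneg Q) fun d => ?_
  have hbest : ‖Ustar (Q₁ d)‖ ≤ ‖d‖ :=
    Submodule.norm_le_of_forall_norm_sub_le (K := T.map (Ustar : H →ₗ[ℂ] Lp2))
      ⟨Q₁ d, hQ₁T d, rfl⟩ <| by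
        rintro _ ⟨g, hg, rfl⟩
        simpa only [ContinuousLinearMap.coe_coe, norm_sub_rev d] using hQ₁min d g hg
  calc ‖Q₁ d‖ = ‖Q (Ustar (Q₁ d))‖ := by rw [hperfect _ (hQ₁T d)]
    _ ≤ ‖Q‖ * ‖Ustar (Q₁ d)‖ := Q.le_opNorm _
    _ ≤ ‖Q‖ * ‖d‖ := by gcongr

/-- The least-squares reconstruction operator `Q₁` has the smallest
operator norm among all bounded perfect reconstruction operators `Q : ℓ² → T`. -/
theorem least_squares_minimal_norm
    {H : Type} [NormedAddCommGroup H] [InnerProductSpace ℂ H] [CompleteSpace H]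
    (T U : Submodule ℂ H) [CompleteSpace T] [CompleteSpace U]
    (hangle : 0 < cosAngleP T U)
    (u : ℕ → H) (A B : ℝ) (hA : 0 < A) (hAB : A ≤ B) (hframe : IsFrameFor u U A B)
    (Ustar : H →L[ℂ] Lp2) (hUstar : ∀ f j, Ustar f j = ⟪u j, f⟫_ℂ)
    (Q₁ : Lp2 →L[ℂ] H) (hQ₁T : ∀ d, Q₁ d ∈ T)
    (hQ₁min : ∀ d : Lp2, ∀ g ∈ T, ‖Ustar (Q₁ d) - d‖ ≤ ‖Ustar g - d‖)
    (Q : Lp2 →L[ℂ] H) (hQT : ∀ d, Q d ∈ T)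
    (hperfect : ∀ g ∈ T, Q (Ustar g) = g) :
    ‖Q₁‖ ≤ ‖Q‖ :=
  least_squares_minimal_norm_general T Ustar Q₁ hQ₁T hQ₁min Q hperfect
end
end

section
/- Let T, U be closed subspaces of H with cos(φ_{T,U}) > 0. Then cos(φ_{T, P_U(T)}) = cos(φ_{T,U}), where P_U(T) denotes the image of T under the orthogonal projection onto U. -/
noncomputable section
open scoped InnerProductSpace ENNReal

/-
For any `g` and any `v ∈ U`, `⟪g, v⟫ = ⟪P_U g, v⟫`, so the supremum of `|⟪g, v⟫|` over unit
vectors `v` of any set `Y ⊆ U` is at most `‖P_U g‖`, with equality as soon as `Y` contains the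
line through `P_U g`. Both `U` and `P_U(T)` contain that line, since `c • P_U g = P_U (c • g)`;
hence both angles equal `inf_{g ∈ T, ‖g‖ = 1} ‖P_U g‖`.
-/

namespace Submodule

variable {H : Type*} [NormedAddCommGroup H] [InnerProductSpace ℂ H]
  (U : Submodule ℂ H) [U.HasOrthogonalProjection]

lemma norm_inner_le_norm_orthogonalProjectionOnto_mul_norm (g : H) {v : H} (hv : v ∈ U) :
    ‖⟪g, v⟫_ℂ‖ ≤ ‖(U.orthogonalProjectionOnto g : H)‖ * ‖v‖ := by
  rw [← U.inner_orthogonalProjectionOnto_eq_of_mem_right ⟨v, hv⟩ g]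
  exact norm_inner_le_norm _ _

lemma inner_orthogonalProjectionOnto_eq_norm_sq (g : H) :
    ⟪g, (U.orthogonalProjectionOnto g : H)⟫_ℂ = (‖(U.orthogonalProjectionOnto g : H)‖ : ℂ) ^ 2 := by
  rw [← U.inner_orthogonalProjectionOnto_eq_of_mem_right, inner_self_eq_norm_sq_to_K, norm_coe]
  rfl

lemma sSup_norm_inner_eq_norm_orthogonalProjectionOnto {Y : Set H} (hYU : Y ⊆ U) (g : H)
    (hY : ∀ c : ℂ, c • (U.orthogonalProjectionOnto g : H) ∈ Y) :
    sSup {s : ℝ | ∃ v ∈ Y, ‖v‖ = 1 ∧ s = ‖⟪g, v⟫_ℂ‖} = ‖(U.orthogonalProjectionOnto g : H)‖ := by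
  set p : H := (U.orthogonalProjectionOnto g : H)
  have hub : ‖p‖ ∈ upperBounds {s : ℝ | ∃ v ∈ Y, ‖v‖ = 1 ∧ s = ‖⟪g, v⟫_ℂ‖} := by
    rintro _ ⟨v, hv, hv1, rfl⟩
    simpa only [hv1, mul_one] using U.norm_inner_le_norm_orthogonalProjectionOnto_mul_norm g (hYU hv)
  refine le_antisymm (Real.sSup_le hub (norm_nonneg p)) ?_
  rcases eq_or_ne p 0 with hp | hp
  · rw [hp, norm_zero]
    exact Real.sSup_nonneg (by rintro _ ⟨v, -, -, rfl⟩; positivity)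
  · refine le_csSup ⟨_, hub⟩ ⟨(‖p‖⁻¹ : ℂ) • p, hY _, norm_smul_inv_norm hp, ?_⟩
    have hp' : ‖p‖ ≠ 0 := norm_ne_zero_iff.mpr hp
    rw [inner_smul_right, U.inner_orthogonalProjectionOnto_eq_norm_sq, norm_mul, norm_inv,
      norm_pow, Complex.norm_real, norm_norm]
    field_simp

end Submodule

lemma cosAngleS_eq_cosAngleP {H : Type} [NormedAddCommGroup H] [InnerProductSpace ℂ H]
    [CompleteSpace H] (T U : Submodule ℂ H) [CompleteSpace U] {Y : Set H} (hYU : Y ⊆ U)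
    (hY : ∀ g ∈ T, ∀ c : ℂ, c • (U.orthogonalProjectionOnto g : H) ∈ Y) :
    cosAngleS T Y = cosAngleP T U := by
  unfold cosAngleS cosAngleP
  congr 1
  ext r
  refine exists_congr fun g => and_congr_right fun hg => and_congr_right fun _ => ?_
  rw [U.sSup_norm_inner_eq_norm_orthogonalProjectionOnto hYU g (hY g hg)]

theorem angle_T_PUT_eq_angle_T_U_general
    {H : Type} [NormedAddCommGroup H] [InnerProductSpace ℂ H] [CompleteSpace H]
    (T U : Submodule ℂ H) [CompleteSpace U] :
    cosAngleS T ((fun x => (U.orthogonalProjectionOnto x : H)) '' (T : Set H)) =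
      cosAngleS T ((U : Submodule ℂ H) : Set H) := by
  have hPT : ∀ g ∈ T, ∀ c : ℂ,
      c • (U.orthogonalProjectionOnto g : H) ∈ (fun x => (U.orthogonalProjectionOnto x : H)) '' T :=
    fun g hg c => ⟨c • g, T.smul_mem c hg, by simp⟩
  have hU : ∀ g ∈ T, ∀ c : ℂ, c • (U.orthogonalProjectionOnto g : H) ∈ (U : Set H) :=
    fun g _ c => U.smul_mem c (SetLike.coe_mem _)
  have hPTU : (fun x => (U.orthogonalProjectionOnto x : H)) '' T ⊆ U :=
    Set.image_subset_iff.mpr fun x _ => (U.orthogonalProjectionOnto x).2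
  rw [cosAngleS_eq_cosAngleP T U hPTU hPT, cosAngleS_eq_cosAngleP T U subset_rfl hU]

/-- If `cos(φ_{T,U}) > 0` then `cos(φ_{T, P_U(T)}) = cos(φ_{T,U})`. -/
theorem angle_T_PUT_eq_angle_T_U
    {H : Type} [NormedAddCommGroup H] [InnerProductSpace ℂ H] [CompleteSpace H]
    (T U : Submodule ℂ H) [CompleteSpace U]
    (hangle : 0 < cosAngleS T ((U : Submodule ℂ H) : Set H)) :
    cosAngleS T ((fun x => (U.orthogonalProjectionOnto x : H)) '' (T : Set H)) =
      cosAngleS T ((U : Submodule ℂ H) : Set H) :=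
  angle_T_PUT_eq_angle_T_U_general T U
end
end

section
/- Let (u_j) be a frame for a closed subspace U of H with frame bounds A, B and frame operator S₁ = UU*. For λ ∈ (0,1] define M_λ = λI + (1−λ)S₁ and u_{λ,j} = M_λ^{−1/2} u_j. Then (u_{λ,j}) is a frame for U with frame bounds A/(λ + (1−λ)A) and B/(λ + (1−λ)B). -/
noncomputable section
open scoped InnerProductSpace ENNReal

/-! With `g = R f`, the identity `R² M = 1` gives
`‖f‖² = ⟪g, M g⟫ = λ‖g‖² + (1 - λ) Σ_j |⟪u_j, g⟫|²`, while `Σ_j |⟪R u_j, f⟫|² = Σ_j |⟪u_j, g⟫|²`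
by self-adjointness; the frame bounds for `g` then pass through the increasing map
`x ↦ x / (λ + (1 - λ) x)`. The frame bounds apply to `g` because `R` preserves `U`: the frame
operator vanishes on `Uᗮ`, so `M = λ` there, the positive operator `R` with `R² = M⁻¹` acts on
`Uᗮ` as `λ^{-1/2}`, and a self-adjoint operator preserving `Uᗮ` preserves `U`. -/

section PositiveOperator

variable {𝕜 E : Type*} [RCLike 𝕜] [NormedAddCommGroup E] [InnerProductSpace 𝕜 E]

/-- `(R + √c)(R - √c) v = R² v - c v = 0`, and `R + √c` is injective because `R` is positive. -/
theorem apply_eq_sqrt_smul_of_apply_apply_eq_smul {R : E →ₗ[𝕜] E}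
    (hR : ∀ x, 0 ≤ RCLike.re ⟪x, R x⟫_𝕜) {c : ℝ} (hc : 0 < c) {v : E}
    (hv : R (R v) = (c : 𝕜) • v) : R v = (√c : 𝕜) • v := by
  set w := R v - (√c : 𝕜) • v
  have hw : R w = -((√c : 𝕜) • w) := by
    have hsq : (√c : 𝕜) * √c = c := by rw [← RCLike.ofReal_mul, Real.mul_self_sqrt hc.le]
    simp only [w, map_sub, map_smul, hv, smul_sub, smul_smul, hsq]
    abel
  have hnonneg : 0 ≤ -(√c * ‖w‖ ^ 2) := by
    simpa [hw, inner_smul_right, inner_self_eq_norm_sq_to_K] using hR w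
  have hzero : √c * ‖w‖ ^ 2 = 0 := le_antisymm (by linarith) (by positivity)
  simpa [(Real.sqrt_pos.2 hc).ne', sub_eq_zero, w] using hzero

end PositiveOperator

theorem LinearMap.IsSymmetric.mapsTo_of_mapsTo_orthogonal {𝕜 E : Type*} [RCLike 𝕜]
    [NormedAddCommGroup E] [InnerProductSpace 𝕜 E] {T : E →ₗ[𝕜] E} (hT : T.IsSymmetric)
    {K : Submodule 𝕜 E} [K.HasOrthogonalProjection] (h : Set.MapsTo T Kᗮ Kᗮ) :
    Set.MapsTo T K K := by
  have hK := hT.orthogonalComplement_mem_invtSubmodule (p := Kᗮ) h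
  rwa [Submodule.orthogonal_orthogonal] at hK

section FrameOperator

variable {𝕜 E ι : Type*} [RCLike 𝕜] [NormedAddCommGroup E] [InnerProductSpace 𝕜 E]
  {u : ι → E} {S : E → E}

theorem hasSum_norm_inner_sq_of_hasSum_frameOperator
    (hS : ∀ f, HasSum (fun j => ⟪u j, f⟫_𝕜 • u j) (S f)) (f : E) :
    HasSum (fun j => ‖⟪u j, f⟫_𝕜‖ ^ 2) (RCLike.re ⟪f, S f⟫_𝕜) := by
  have h := RCLike.hasSum_re (𝕜 := 𝕜) ((innerSL 𝕜 f).hasSum (hS f))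
  have hterm : ∀ j, RCLike.re ⟪f, ⟪u j, f⟫_𝕜 • u j⟫_𝕜 = ‖⟪u j, f⟫_𝕜‖ ^ 2 := fun j => by
    rw [inner_smul_right, ← inner_conj_symm f (u j), RCLike.mul_conj]
    norm_cast
  simpa only [innerSL_apply_apply, hterm] using h

theorem frameOperator_eq_zero_of_forall_inner_eq_zero
    (hS : ∀ f, HasSum (fun j => ⟪u j, f⟫_𝕜 • u j) (S f)) {v : E} (hv : ∀ j, ⟪u j, v⟫_𝕜 = 0) :
    S v = 0 :=
  (hS v).unique (by simp [hv])

end FrameOperator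

theorem Commute.of_mul_mul_self_eq_one {M : Type*} [Monoid M] {a b : M}
    (h₁ : a * (b * b) = 1) (h₂ : b * b * a = 1) : Commute a b :=
  calc a * b = a * b * (b * b * a) := by rw [h₂, mul_one]
    _ = a * (b * b) * (b * a) := by simp only [mul_assoc]
    _ = b * a := by rw [h₁, one_mul]

section Reweighting

variable {lam a g t : ℝ}

theorem div_add_mul_mul_le (hlam0 : 0 < lam) (hlam1 : lam ≤ 1) (ha : 0 ≤ a) (h : a * g ≤ t) :
    a / (lam + (1 - lam) * a) * (lam * g + (1 - lam) * t) ≤ t := by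
  have hD : 0 < lam + (1 - lam) * a := by nlinarith
  rw [div_mul_eq_mul_div, div_le_iff₀ hD]
  nlinarith

theorem le_div_add_mul_mul (hlam0 : 0 < lam) (hlam1 : lam ≤ 1) (ha : 0 ≤ a) (h : t ≤ a * g) :
    t ≤ a / (lam + (1 - lam) * a) * (lam * g + (1 - lam) * t) := by
  have hD : 0 < lam + (1 - lam) * a := by nlinarith
  rw [div_mul_eq_mul_div, le_div_iff₀ hD]
  nlinarith

end Reweighting

/-- `R = M_λ^{-1/2}` is encoded as a positive self-adjoint operator with `R² = M_λ⁻¹`. -/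
theorem weighted_frame_bounds_general
    {H : Type} [NormedAddCommGroup H] [InnerProductSpace ℂ H]
    (U : Submodule ℂ H) [CompleteSpace U]
    (u : ℕ → H) (A B : ℝ) (hA : 0 < A) (hAB : A ≤ B) (hframe : IsFrameFor u U A B)
    (S₁ : H →L[ℂ] H) (hS₁ : ∀ f, HasSum (fun j => ⟪u j, f⟫_ℂ • u j) (S₁ f))
    (lam : ℝ) (hlam0 : 0 < lam) (hlam1 : lam ≤ 1)
    (M : H →L[ℂ] H)
    (hM : M = (lam : ℂ) • ContinuousLinearMap.id ℂ H + ((1 - lam : ℝ) : ℂ) • S₁)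
    (R : H →L[ℂ] H)
    (hRsa : ∀ x y : H, ⟪R x, y⟫_ℂ = ⟪x, R y⟫_ℂ)
    (hRpos : ∀ x : H, 0 ≤ (⟪x, R x⟫_ℂ).re)
    (hRsq : M.comp (R.comp R) = ContinuousLinearMap.id ℂ H ∧
      (R.comp R).comp M = ContinuousLinearMap.id ℂ H) :
    IsFrameFor (fun j => R (u j)) U
      (A / (lam + (1 - lam) * A)) (B / (lam + (1 - lam) * B)) := by
  obtain ⟨hu, hbounds⟩ := hframe
  have hMR : M * R = R * M := Commute.of_mul_mul_self_eq_one hRsq.1 hRsq.2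
  have hRperp : ∀ v ∈ Uᗮ, R v = (√lam⁻¹ : ℂ) • v := by
    intro v hv
    have hS₁v : S₁ v = 0 := frameOperator_eq_zero_of_forall_inner_eq_zero hS₁
      fun j => (Submodule.mem_orthogonal U v).1 hv (u j) (hu j)
    have hMv : M v = (lam : ℂ) • v := by simp [hM, hS₁v]
    have hRRv : R (R v) = ((lam⁻¹ : ℝ) : ℂ) • v := by
      have h : R (R (M v)) = v := congr($(hRsq.2) v)
      rw [hMv, map_smul, map_smul] at h
      rwa [Complex.ofReal_inv, eq_inv_smul_iff₀ (by exact_mod_cast hlam0.ne')]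
    exact apply_eq_sqrt_smul_of_apply_apply_eq_smul (R := R.toLinearMap) hRpos
      (inv_pos.2 hlam0) hRRv
  have hRU : Set.MapsTo R U U :=
    (show R.toLinearMap.IsSymmetric from hRsa).mapsTo_of_mapsTo_orthogonal fun v hv => by
      simpa [hRperp v hv] using Uᗮ.smul_mem _ hv
  have hnorm : ∀ f, ‖f‖ ^ 2 = lam * ‖R f‖ ^ 2 + (1 - lam) * ∑' j, ‖⟪u j, R f⟫_ℂ‖ ^ 2 := by
    intro f
    have hRMR : R (M (R f)) = f := congr($hMR (R f)).symm.trans congr($(hRsq.1) f)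
    have hf : ⟪f, f⟫_ℂ = ⟪R f, M (R f)⟫_ℂ := by rw [hRsa, hRMR]
    rw [(hasSum_norm_inner_sq_of_hasSum_frameOperator hS₁ (R f)).tsum_eq,
      ← inner_self_eq_norm_sq (𝕜 := ℂ), ← inner_self_eq_norm_sq (𝕜 := ℂ), hf, hM]
    simp
  refine ⟨fun j => hRU (hu j), fun f hf => ?_⟩
  obtain ⟨hlo, hhi⟩ := hbounds (R f) (hRU hf)
  simp only [hRsa, hnorm f]
  exact ⟨div_add_mul_mul_le hlam0 hlam1 hA.le hlo,
    le_div_add_mul_mul hlam0 hlam1 (hA.le.trans hAB) hhi⟩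

/-- For `λ ∈ (0,1]`, `M_λ = λI + (1−λ)S₁` and `u_{λ,j} = M_λ^{−1/2} u_j`,
the sequence `(u_{λ,j})` is a frame for `U` with bounds `A/(λ+(1−λ)A)` and
`B/(λ+(1−λ)B)`. Here `R = M_λ^{−1/2}` is characterized as the positive self-adjoint
operator with `R² = M_λ⁻¹`. -/
theorem weighted_frame_bounds
    {H : Type} [NormedAddCommGroup H] [InnerProductSpace ℂ H] [CompleteSpace H]
    (U : Submodule ℂ H) [CompleteSpace U]
    (u : ℕ → H) (A B : ℝ) (hA : 0 < A) (hAB : A ≤ B) (hframe : IsFrameFor u U A B)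
    (S₁ : H →L[ℂ] H) (hS₁ : ∀ f, HasSum (fun j => ⟪u j, f⟫_ℂ • u j) (S₁ f))
    (lam : ℝ) (hlam0 : 0 < lam) (hlam1 : lam ≤ 1)
    (M : H →L[ℂ] H)
    (hM : M = (lam : ℂ) • ContinuousLinearMap.id ℂ H + ((1 - lam : ℝ) : ℂ) • S₁)
    (R : H →L[ℂ] H)
    (hRsa : ∀ x y : H, ⟪R x, y⟫_ℂ = ⟪x, R y⟫_ℂ)
    (hRpos : ∀ x : H, 0 ≤ (⟪x, R x⟫_ℂ).re)
    (hRsq : M.comp (R.comp R) = ContinuousLinearMap.id ℂ H ∧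
      (R.comp R).comp M = ContinuousLinearMap.id ℂ H) :
    IsFrameFor (fun j => R (u j)) U
      (A / (lam + (1 - lam) * A)) (B / (lam + (1 - lam) * B)) :=
  weighted_frame_bounds_general U u A B hA hAB hframe S₁ hS₁ lam hlam0 hlam1 M hM R hRsa hRpos hRsq
end
end
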